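/- Fix k ∈ [N] and ℓ ∈ {k+1,…,N}. For a uniformly random π ∈ S_N, the probability that π_{>k}(k) = ℓ equals 1/N; equivalently, the number of permutations π ∈ S_N with π_{>k}(k) = ℓ equals (N−1)!. -/

import Mathlib

/-- Embedding of `Fin (k+1)` into `Fin N` (where `k : Fin N`). -/
def emb {N : ℕ} (k : Fin N) (t : Fin (k.val + 1)) : Fin N :=
  ⟨t.val, lt_of_lt_of_le t.isLt k.isLt⟩

/-- `Phi t = (N t_N)(N−1 t_{N−1})⋯(2 t_2)(1 t_1)`, the strictly monotone factorization map. -/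
def Phi {N : ℕ} (t : ∀ k : Fin N, Fin (k.val + 1)) : Equiv.Perm (Fin N) :=
  ((List.finRange N).reverse.map fun k => Equiv.swap k (emb k (t k))).prod

instance {N : ℕ} : Nonempty (∀ k : Fin N, Fin (k.val + 1)) := ⟨fun _ => 0⟩

/-- `tof π` is the tuple `(t_1(π),…,t_N(π))` of the strictly monotone factorization of `π`. -/
noncomputable def tof {N : ℕ} (π : Equiv.Perm (Fin N)) : ∀ k : Fin N, Fin (k.val + 1) :=
  Function.invFun Phi π

/-- `ptail π k` is `π_{>k} = (N t_N)⋯(k+1 t_{k+1})`. -/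
noncomputable def ptail {N : ℕ} (π : Equiv.Perm (Fin N)) (k : Fin N) : Equiv.Perm (Fin N) :=
  (((List.finRange N).reverse.filter fun j => decide (k < j)).map
    fun j => Equiv.swap j (emb j (tof π j))).prod

/-! Read from right to left, the product `(N t_N)⋯(k+1 t_{k+1})` moves `k` along an increasing
walk: at step `j` the current point `x < j` jumps to `j` if `t_j = x` and stays put otherwise.
Hence `π_{>k}(k) = ℓ` iff `t_ℓ` is the point reached after the steps `k+1, …, ℓ-1` and
`t_j ≠ ℓ` for all `j > ℓ`. The first condition determines `t_ℓ` from the other coordinates, so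
among the tuples `(t_1, …, t_N)`, which `Phi` puts in bijection with `S_N`, exactly
`∏_{j < ℓ} j · ∏_{j > ℓ} (j - 1) = (N - 1)!` satisfy both. -/

open Equiv Finset
open scoped Nat

lemma card_filter_and_apply_eq_mul {ι : Type*} [Fintype ι] [DecidableEq ι] {β : ι → Type*}
    [∀ i, Fintype (β i)] [∀ i, DecidableEq (β i)] (i : ι) (P : (∀ j, β j) → Prop)
    [DecidablePred P] (f : (∀ j, β j) → β i) (hP : ∀ t a, P (Function.update t i a) ↔ P t)
    (hf : ∀ t a, f (Function.update t i a) = f t) :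
    #{t | P t ∧ t i = f t} * Fintype.card (β i) = #{t | P t} := by
  rw [← card_univ, ← card_product]
  refine card_nbij' (fun p => Function.update p.1 i p.2)
    (fun u => (Function.update u i (f u), u i)) ?_ ?_ ?_ ?_
  · rintro ⟨t, a⟩ h
    simp only [mem_coe, mem_product, mem_filter, mem_univ, true_and, and_true] at h ⊢
    exact (hP t a).mpr h.1
  · intro u hu
    simp only [mem_coe, mem_product, mem_filter, mem_univ, true_and, and_true] at hu ⊢
    exact ⟨(hP u _).mpr hu, by rw [hf, Function.update_self]⟩
  · rintro ⟨t, a⟩ h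
    simp only [mem_coe, mem_product, mem_filter, mem_univ, true_and, and_true] at h
    simp only [Function.update_idem, Function.update_self, hf, ← h.2, Function.update_eq_self]
  · intro u _
    simp only [Function.update_idem, Function.update_eq_self]

lemma prod_range_ite_lt {a n : ℕ} (h : a < n) :
    ∏ m ∈ range n, (if a < m then m else m + 1) = (a + 1) * (n - 1)! := by
  induction n, Nat.succ_le_of_lt h using Nat.le_induction with
  | base =>
    rw [prod_congr rfl fun m hm =>
        if_neg (Nat.not_lt.mpr (Nat.lt_succ_iff.mp (mem_range.mp hm))),
      prod_range_add_one_eq_factorial, Nat.factorial_succ, Nat.succ_sub_one]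
  | succ n hn ih =>
    rw [prod_range_succ, ih (Nat.lt_of_succ_le hn), if_pos (Nat.lt_of_succ_le hn), mul_assoc,
      Nat.add_sub_cancel, mul_comm _ n, Nat.mul_factorial_pred (by omega)]

namespace MonotoneFactorization

variable {N : ℕ}

abbrev FactorTuple (N : ℕ) := ∀ k : Fin N, Fin (k.val + 1)

def swapProd (t : FactorTuple N) (L : List (Fin N)) : Perm (Fin N) :=
  (L.map fun j => swap j (emb j (t j))).prod

lemma swapProd_cons (t : FactorTuple N) (j : Fin N) (L : List (Fin N)) :
    swapProd t (j :: L) = swap j (emb j (t j)) * swapProd t L := by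
  simp [swapProd]

lemma emb_le (j : Fin N) (a : Fin (j.val + 1)) : emb j a ≤ j :=
  Fin.le_iff_val_le_val.mpr (Nat.lt_succ_iff.mp a.isLt)

lemma swapProd_apply_lt {t : FactorTuple N} {L : List (Fin N)} {m x : Fin N}
    (hL : ∀ j ∈ L, j < m) (hx : x < m) : swapProd t L x < m := by
  induction L with
  | nil => exact hx
  | cons j L ih =>
    have hj : j < m := hL j List.mem_cons_self
    rw [swapProd_cons, Perm.mul_apply, swap_apply_def]
    split_ifs
    · exact (emb_le j (t j)).trans_lt hj
    · exact hj
    · exact ih fun i hi => hL i (List.mem_cons_of_mem j hi)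

lemma swapProd_apply_of_forall_lt {t : FactorTuple N} {L : List (Fin N)} {m : Fin N}
    (hL : ∀ j ∈ L, j < m) : swapProd t L m = m := by
  induction L with
  | nil => rfl
  | cons j L ih =>
    have hj : j < m := hL j List.mem_cons_self
    rw [swapProd_cons, Perm.mul_apply, ih fun i hi => hL i (List.mem_cons_of_mem j hi)]
    exact swap_apply_of_ne_of_ne hj.ne' ((emb_le j (t j)).trans_lt hj).ne'

lemma swapProd_update {t : FactorTuple N} {L : List (Fin N)} {i : Fin N} (hi : i ∉ L)
    (a : Fin (i.val + 1)) : swapProd (Function.update t i a) L = swapProd t L := by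
  unfold swapProd
  congr 1
  refine List.map_congr_left fun j hj => ?_
  rw [Function.update_of_ne (ne_of_mem_of_not_mem hj hi)]

lemma eqOn_of_swapProd_eq {t s : FactorTuple N} {L : List (Fin N)} (hL : L.Pairwise (· > ·))
    (h : swapProd t L = swapProd s L) : ∀ j ∈ L, t j = s j := by
  induction L with
  | nil => simp
  | cons j L ih =>
    obtain ⟨hjL, hL⟩ := List.pairwise_cons.mp hL
    -- the first factor is the only one moving `j`, so `j ↦ t j` can be read off
    have htj : t j = s j := by
      have hj := congrArg (· j) h
      simp only [swapProd_cons, Perm.mul_apply, swapProd_apply_of_forall_lt hjL,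
        swap_apply_left] at hj
      exact Fin.ext (congrArg Fin.val hj :)
    rw [swapProd_cons, swapProd_cons, htj, mul_right_inj] at h
    exact List.forall_mem_cons.mpr ⟨htj, ih hL h⟩

lemma pairwise_gt_finRange_reverse : (List.finRange N).reverse.Pairwise (· > ·) :=
  List.pairwise_reverse.mpr (List.pairwise_lt_finRange N)

lemma Phi_injective : Function.Injective (Phi (N := N)) := fun t s h =>
  funext fun j => eqOn_of_swapProd_eq pairwise_gt_finRange_reverse h j (by simp)

lemma card_factorTuple : Fintype.card (FactorTuple N) = N ! := by
  rw [Fintype.card_pi]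
  simp only [Fintype.card_fin]
  rw [Fin.prod_univ_eq_prod_range (· + 1) N, Finset.prod_range_add_one_eq_factorial]

lemma Phi_bijective : Function.Bijective (Phi (N := N)) := by
  rw [Fintype.bijective_iff_injective_and_card, card_factorTuple, Fintype.card_perm,
    Fintype.card_fin]
  exact ⟨Phi_injective, rfl⟩

lemma tof_Phi (t : FactorTuple N) : tof (Phi t) = t :=
  Function.leftInverse_invFun Phi_injective t

lemma card_filter_forall_emb_ne (ℓ : Fin N) :
    #{t : FactorTuple N | ∀ j, ℓ < j → emb j (t j) ≠ ℓ}
      = ∏ j : Fin N, if ℓ < j then j.val else j.val + 1 := by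
  have hpi : ({t : FactorTuple N | ∀ j, ℓ < j → emb j (t j) ≠ ℓ} : Finset _)
      = Fintype.piFinset fun j => {a | ℓ < j → emb j a ≠ ℓ} := by
    ext t
    simp [Fintype.mem_piFinset]
  rw [hpi, Fintype.card_piFinset]
  refine prod_congr rfl fun j _ => ?_
  split_ifs with hj
  · have hℓ : ℓ.val < j.val + 1 := Nat.lt_succ_of_lt hj
    have herase :
        ({a | ℓ < j → emb j a ≠ ℓ} : Finset (Fin (j.val + 1))) = univ.erase ⟨ℓ, hℓ⟩ := by
      ext a
      simp [hj, Fin.ext_iff, emb]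
    rw [herase, card_erase_of_mem (mem_univ _), card_univ, Fintype.card_fin, Nat.add_sub_cancel]
  · simp [hj]

lemma prod_ite_lt (ℓ : Fin N) :
    ∏ j : Fin N, (if ℓ < j then j.val else j.val + 1) = (ℓ.val + 1) * (N - 1)! := by
  simp only [Fin.lt_def]
  rw [Fin.prod_univ_eq_prod_range (fun m => if ℓ.val < m then m else m + 1),
    prod_range_ite_lt ℓ.isLt]

lemma swapProd_apply_eq_iff {t : FactorTuple N} {L : List (Fin N)} {k ℓ : Fin N}
    (hL : L.Pairwise (· > ·)) (hk : ∀ j ∈ L, k < j) (hℓ : ℓ ∈ L) :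
    swapProd t L k = ℓ ↔
      emb ℓ (t ℓ) = swapProd t (L.filter (· < ℓ)) k ∧ ∀ j ∈ L, ℓ < j → emb j (t j) ≠ ℓ := by
  induction L with
  | nil => simp at hℓ
  | cons j L ih =>
    obtain ⟨hjL, hL⟩ := List.pairwise_cons.mp hL
    have hlt : swapProd t L k < j := swapProd_apply_lt hjL (hk j List.mem_cons_self)
    rw [swapProd_cons, Perm.mul_apply, swap_apply_eq_iff]
    rcases List.mem_cons.mp hℓ with rfl | hℓL
    · have hfilter : (ℓ :: L).filter (· < ℓ) = L := by
        simpa using List.filter_eq_self.mpr fun i hi => decide_eq_true (hjL i hi)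
      have hnot : ∀ i ∈ ℓ :: L, ¬ ℓ < i := fun i hi h =>
        (List.mem_cons.mp hi).elim (fun e => (e ▸ h).false) fun hi => (hjL i hi).asymm h
      simp only [hfilter, swap_apply_left, eq_comm, iff_self_and]
      exact fun _ i hi h => absurd h (hnot i hi)
    · have hℓj : ℓ < j := hjL ℓ hℓL
      have hfilter : (j :: L).filter (· < ℓ) = L.filter (· < ℓ) := by
        simp [hℓj.asymm]
      rw [hfilter, List.forall_mem_cons]
      by_cases he : emb j (t j) = ℓ
      · rw [he, swap_apply_right]
        exact iff_of_false hlt.ne fun h => h.2.1 hℓj rfl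
      · rw [swap_apply_of_ne_of_ne hℓj.ne (Ne.symm he),
          ih hL (fun i hi => hk i (List.mem_cons_of_mem j hi)) hℓL]
        exact ⟨fun ⟨h₁, h₂⟩ => ⟨h₁, fun _ => he, h₂⟩, fun ⟨h₁, _, h₂⟩ => ⟨h₁, h₂⟩⟩

lemma card_filter_swapProd_apply_eq_mul {L : List (Fin N)} {k ℓ : Fin N}
    (hL : L.Pairwise (· > ·)) (hk : ∀ j ∈ L, k < j) (hℓ : ℓ ∈ L) :
    #{t : FactorTuple N | swapProd t L k = ℓ} * (ℓ.val + 1)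
      = #{t : FactorTuple N | ∀ j ∈ L, ℓ < j → emb j (t j) ≠ ℓ} := by
  set B := L.filter (· < ℓ)
  have hB : ℓ ∉ B := by simp [B]
  have hlt (t : FactorTuple N) : swapProd t B k < ℓ :=
    swapProd_apply_lt (by simp [B]) (hk ℓ hℓ)
  let f (t : FactorTuple N) : Fin (ℓ.val + 1) := ⟨swapProd t B k, Nat.lt_succ_of_lt (hlt t)⟩
  have hcount := card_filter_and_apply_eq_mul ℓ (fun t => ∀ j ∈ L, ℓ < j → emb j (t j) ≠ ℓ) f
    (fun t a => forall₂_congr fun j _ => imp_congr_right fun h => by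
      rw [Function.update_of_ne h.ne'])
    (fun t a => Fin.ext (by simp only [f, swapProd_update hB]))
  rw [Fintype.card_fin] at hcount
  rw [← hcount]
  congr 2
  ext t
  simp only [mem_filter, mem_univ, true_and]
  rw [swapProd_apply_eq_iff hL hk hℓ, and_comm]
  exact and_congr_right' (Fin.ext_iff.trans (Fin.ext_iff (a := t ℓ) (b := f t)).symm)

lemma card_filter_ptail_apply_eq (k x y : Fin N) :
    #{π : Perm (Fin N) | ptail π k x = y}
      = #{t : FactorTuple N | swapProd t ((List.finRange N).reverse.filter (k < ·)) x = y} :=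
  (card_equiv (Equiv.ofBijective Phi Phi_bijective) fun t => by
    simp [ptail, swapProd, tof_Phi]).symm

end MonotoneFactorization

open MonotoneFactorization in
theorem stmt4_general {N : ℕ} (k ℓ : Fin N) (hkl : k < ℓ) :
    (Finset.univ.filter fun π : Equiv.Perm (Fin N) => ptail π k k = ℓ).card
      = (N - 1).factorial := by
  set S := (List.finRange N).reverse.filter (k < ·)
  have hS : S.Pairwise (· > ·) := pairwise_gt_finRange_reverse.filter _
  have hcount :=
    card_filter_swapProd_apply_eq_mul (k := k) (ℓ := ℓ) hS (by simp [S]) (by simp [S, hkl])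
  have hupper : ∀ t : FactorTuple N,
      (∀ j ∈ S, ℓ < j → emb j (t j) ≠ ℓ) ↔ ∀ j, ℓ < j → emb j (t j) ≠ ℓ := fun t =>
    ⟨fun h j hj => h j (by simp [S, hkl.trans hj]) hj, fun h j _ => h j⟩
  rw [filter_congr fun t _ => hupper t, card_filter_forall_emb_ne, prod_ite_lt, mul_comm]
    at hcount
  rw [card_filter_ptail_apply_eq]
  exact Nat.eq_of_mul_eq_mul_left (Nat.succ_pos _) hcount

/-- Fix `k ∈ [N]` and `ℓ ∈ {k+1,…,N}`.  For uniformly random `π ∈ S_N`,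
`Pr(π_{>k}(k) = ℓ) = 1/N`; equivalently, the number of permutations `π ∈ S_N` with
`π_{>k}(k) = ℓ` equals `(N−1)!`. -/
theorem stmt4 {N : ℕ} (hN : 1 ≤ N) (k ℓ : Fin N) (hkl : k < ℓ) :
    (Finset.univ.filter fun π : Equiv.Perm (Fin N) => ptail π k k = ℓ).card
      = (N - 1).factorial :=
  stmt4_general k ℓ hkl
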